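/- In the sophisticated rock-throwing model, in the context u where ST = 1 and BT = 1 (so SH = 1, BH = 0, BS = 1 in the unique solution): ST = 1 is a cause of BS = 1 in (M,u) with dr((M,u), ST = 1, BS = 1) = 1, while BT = 1 is not a cause of BS = 1 in (M,u), so dr((M,u), BT = 1, BS = 1) = 0. -/

import Mathlib

open Classical

/-- A causal model over exogenous variables `U` and endogenous variables `V`,
with integer-valued variables.  `Rexo Y` / `R X` are the (intended) ranges of
the variables, and `F X` is the structural equation for the endogenous
variable `X`, giving its value as a function of the values of all other
variables. -/
structure CausalModel (U V : Type) where
  Rexo : U → Set ℤ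
  R : V → Set ℤ
  F : V → (U → ℤ) → (V → ℤ) → ℤ

namespace CausalModel

variable {U V : Type}

/-- A causal model is recursive if the variables can be ordered so that each
structural equation depends only on the values of strictly earlier endogenous
variables (equivalently, the dependency graph is acyclic). -/
def Recursive (M : CausalModel U V) : Prop :=
  ∃ ord : V → ℕ, ∀ (X : V) (u : U → ℤ) (g g' : V → ℤ),
    (∀ Y, ord Y < ord X → g Y = g' Y) → M.F X u g = M.F X u g'

/-- `s` simultaneously satisfies all the structural equations in context `u`. -/
def IsSolution (M : CausalModel U V) (u : U → ℤ) (s : V → ℤ) : Prop :=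
  ∀ X, s X = M.F X u s

/-- The (unique, for recursive models) solution of the equations in context `u`. -/
noncomputable def solution (M : CausalModel U V) (u : U → ℤ) : V → ℤ :=
  Classical.epsilon fun s => M.IsSolution u s

/-- The model `M_{A ← y}` obtained by replacing the equations of the variables
in `A` by the constant values given by `y`. -/
noncomputable def intervene (M : CausalModel U V) (A : Set V) (y : V → ℤ) :
    CausalModel U V where
  Rexo := M.Rexo
  R := M.R
  F := fun X u g => if X ∈ A then y X else M.F X u g

end CausalModel

/-- Boolean combinations of primitive events `X = x`. -/
inductive CausalFormula (V : Type) where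
  | tru : CausalFormula V
  | eq : V → ℤ → CausalFormula V
  | not : CausalFormula V → CausalFormula V
  | and : CausalFormula V → CausalFormula V → CausalFormula V
  | or : CausalFormula V → CausalFormula V → CausalFormula V
  | iff : CausalFormula V → CausalFormula V → CausalFormula V

/-- Truth of a causal formula under an assignment to the endogenous variables. -/
def CausalFormula.holds {V : Type} (s : V → ℤ) : CausalFormula V → Prop
  | tru => True
  | eq X x => s X = x
  | not φ => ¬ φ.holds s
  | and φ χ => φ.holds s ∧ χ.holds s
  | or φ χ => φ.holds s ∨ χ.holds s
  | iff φ χ => φ.holds s ↔ χ.holds s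

/-- `(M,u) ⊨ [A ← y] φ` : `φ` holds in the unique solution of `M_{A ← y}` in
context `u`. -/
def sat {U V : Type} (M : CausalModel U V) (u : U → ℤ) (A : Set V) (y : V → ℤ)
    (φ : CausalFormula V) : Prop :=
  φ.holds ((M.intervene A y).solution u)

/-- Condition AC2 of the Halpern–Pearl definition of causality, for the single
conjunct `X = x`, witnessed by the partition `(Wᶜ, W)` (so `Z = Wᶜ ∋ X`) and
the setting `(x', w')` of `(X, W)`. -/
def AC2 {U V : Type} (M : CausalModel U V) (u : U → ℤ) (X : V) (x : ℤ)
    (φ : CausalFormula V) (W : Set V) (x' : ℤ) (w' : V → ℤ) : Prop :=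
  X ∉ W ∧ x' ∈ M.R X ∧ (∀ Y ∈ W, w' Y ∈ M.R Y) ∧
  -- AC2(a): (M,u) ⊨ [X ← x', W ← w'] ¬φ
  ¬ sat M u (insert X W) (fun Y => if Y = X then x' else w' Y) φ ∧
  -- AC2(b): (M,u) ⊨ [X ← x, W ← w', Z' ← z*] φ for all subsets Z' of Z = Wᶜ
  ∀ Z' : Set V, Z' ⊆ Wᶜ →
    sat M u (insert X (W ∪ Z'))
      (fun Y => if Y = X then x else if Y ∈ W then w' Y else M.solution u Y) φ

/-- `X = x` is a cause of `φ` in `(M,u)`: AC1 together with AC2 (AC3 is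
automatic for single conjuncts). -/
def IsCause {U V : Type} (M : CausalModel U V) (u : U → ℤ) (X : V) (x : ℤ)
    (φ : CausalFormula V) : Prop :=
  (M.solution u X = x ∧ φ.holds (M.solution u)) ∧
  ∃ W x' w', AC2 M u X x φ W x' w'

/-- The degree of responsibility of `X = x` for `φ` in `(M,u)` : `0` if
`X = x` is not a cause of `φ`, and otherwise `1/(k+1)` where `k` is the
minimal, over all AC2 witnesses, number of variables of `W` whose value in
`w'` differs from their value in the unique solution of `(M,u)`. -/
noncomputable def dr {U V : Type} (M : CausalModel U V) (u : U → ℤ) (X : V)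
    (x : ℤ) (φ : CausalFormula V) : ℚ :=
  if IsCause M u X x φ then
    1 / ((sInf {k : ℕ | ∃ W x' w', AC2 M u X x φ W x' w' ∧
        {Y | Y ∈ W ∧ w' Y ≠ M.solution u Y}.ncard = k} : ℕ) + 1 : ℚ)
  else 0

/-- Variables of the sophisticated rock-throwing model. -/
inductive RockVar2 : Type where
  | ST : RockVar2
  | BT : RockVar2
  | SH : RockVar2
  | BH : RockVar2
  | BS : RockVar2
deriving DecidableEq

/-- The sophisticated rock-throwing model: `ST` and `BT` copy values
determined by the exogenous context, `SH = ST`, `BH = 1` iff `BT = 1` and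
`SH = 0`, and `BS = 1` iff `SH = 1` or `BH = 1`. -/
def sophRock : CausalModel (Fin 2) RockVar2 where
  Rexo := fun _ => {0, 1}
  R := fun _ => {0, 1}
  F := fun X u g =>
    match X with
    | .ST => u 0
    | .BT => u 1
    | .SH => g .ST
    | .BH => if g .BT = 1 ∧ g .SH = 0 then 1 else 0
    | .BS => if g .SH = 1 ∨ g .BH = 1 then 1 else 0

/-!
In a recursive model the solution of every intervened model is unique, so it can be read off
variable by variable from the structural equations. When both throw, Suzy's rock hits and
Billy's does not. Setting `ST = 0` while freezing `BH` at its actual value `0` makes the bottle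
survive, and the frozen value changes nothing, so `ST = 1` is a cause with `k = 0`. For `BT`
no witness exists: whatever `W` forces `BS ≠ 1` under `BT ← x'` must leave `SH ≠ 1` and
`BH ≠ 1`, and then restoring `BT = 1` together with the actual value `BH = 0` still leaves
`BS = 0`, violating AC2(b).
-/

namespace CausalModel

variable {U V : Type} {M : CausalModel U V}

theorem Recursive.intervene (hM : M.Recursive) (A : Set V) (y : V → ℤ) :
    (M.intervene A y).Recursive := by
  obtain ⟨ord, hord⟩ := hM
  refine ⟨ord, fun X u g g' h => ?_⟩
  simp only [CausalModel.intervene, hord X u g g' h]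

theorem Recursive.eq_of_isSolution (hM : M.Recursive) {u : U → ℤ} {s t : V → ℤ}
    (hs : M.IsSolution u s) (ht : M.IsSolution u t) : s = t := by
  obtain ⟨ord, hord⟩ := hM
  funext X
  induction h : ord X using Nat.strong_induction_on generalizing X with
  | _ n ih =>
    rw [hs X, ht X]
    exact hord X u s t fun Y hY => ih (ord Y) (h ▸ hY) Y rfl

theorem Recursive.exists_isSolution [Finite V] (hM : M.Recursive) (u : U → ℤ) :
    ∃ s, M.IsSolution u s := by
  obtain ⟨ord, hord⟩ := hM
  obtain ⟨m, hm⟩ := Finite.bddAbove_range ord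
  let T : (V → ℤ) → V → ℤ := fun g X => M.F X u g
  -- after `k` rounds of evaluating all equations, the variables of rank `< k` are stable
  have stable : ∀ k X, ord X < k → T^[k + 1] 0 X = T^[k] 0 X := by
    intro k
    induction k with
    | zero => intro X hX; omega
    | succ k ih =>
      intro X hX
      rw [Function.iterate_succ_apply' T (k + 1)]
      conv_rhs => rw [Function.iterate_succ_apply' T k]
      exact hord X u _ _ fun Y hY => ih Y (by omega)
  refine ⟨T^[m + 1] 0, fun X => ?_⟩
  rw [← stable (m + 1) X (Nat.lt_succ_of_le (hm ⟨X, rfl⟩)), Function.iterate_succ_apply']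

theorem Recursive.isSolution_solution [Finite V] (hM : M.Recursive) (u : U → ℤ) :
    M.IsSolution u (M.solution u) :=
  Classical.epsilon_spec (hM.exists_isSolution u)

theorem Recursive.solution_eq (hM : M.Recursive) {u : U → ℤ} {s : V → ℤ}
    (hs : M.IsSolution u s) : M.solution u = s :=
  hM.eq_of_isSolution (Classical.epsilon_spec ⟨s, hs⟩) hs

theorem Recursive.solution_intervene_of_mem [Finite V] (hM : M.Recursive) {A : Set V}
    (y : V → ℤ) (u : U → ℤ) {X : V} (hX : X ∈ A) :
    (M.intervene A y).solution u X = y X := by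
  rw [(hM.intervene A y).isSolution_solution u X]
  exact if_pos hX

theorem Recursive.solution_intervene_of_notMem [Finite V] (hM : M.Recursive) {A : Set V}
    (y : V → ℤ) (u : U → ℤ) {X : V} (hX : X ∉ A) :
    (M.intervene A y).solution u X = M.F X u ((M.intervene A y).solution u) := by
  rw [(hM.intervene A y).isSolution_solution u X]
  exact if_neg hX

end CausalModel

theorem dr_eq_one_of_AC2_of_eqOn {U V : Type} {M : CausalModel U V} {u : U → ℤ} {X : V}
    {x : ℤ} {φ : CausalFormula V} (hcause : IsCause M u X x φ) {W : Set V} {x' : ℤ} {w' : V → ℤ}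
    (hAC2 : AC2 M u X x φ W x' w') (hw' : Set.EqOn w' (M.solution u) W) :
    dr M u X x φ = 1 := by
  have hk : sInf {k : ℕ | ∃ W x' w', AC2 M u X x φ W x' w' ∧
      {Y | Y ∈ W ∧ w' Y ≠ M.solution u Y}.ncard = k} = 0 := by
    refine Nat.sInf_eq_zero.mpr (Or.inl ⟨W, x', w', hAC2, ?_⟩)
    rw [Set.sep_eq_empty_iff_mem_false.mpr fun _ hY hne => hne (hw' hY), Set.ncard_empty]
  simp [dr, hcause, hk]

instance : Fintype RockVar2 :=
  ⟨{.ST, .BT, .SH, .BH, .BS}, fun X => by cases X <;> simp⟩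

theorem sophRock_recursive : sophRock.Recursive := by
  refine ⟨fun | .ST => 0 | .BT => 0 | .SH => 1 | .BH => 2 | .BS => 3, ?_⟩
  rintro (_ | _ | _ | _ | _) u g g' h <;> simp only [sophRock]
  · rw [h .ST (by decide)]
  · rw [h .BT (by decide), h .SH (by decide)]
  · rw [h .SH (by decide), h .BH (by decide)]

theorem sophRock_solution_of_throws {u : Fin 2 → ℤ} (h0 : u 0 = 1) (h1 : u 1 = 1) :
    sophRock.solution u = fun X => if X = .BH then 0 else 1 :=
  sophRock_recursive.solution_eq fun X => by cases X <;> simp [sophRock, h0, h1]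

section Intervention

variable (A : Set RockVar2) (y : RockVar2 → ℤ) (u : Fin 2 → ℤ)

theorem sophRock_intervene_solution_of_mem {X : RockVar2} (hX : X ∈ A) :
    (sophRock.intervene A y).solution u X = y X :=
  sophRock_recursive.solution_intervene_of_mem y u hX

theorem sophRock_intervene_solution_SH :
    (sophRock.intervene A y).solution u .SH =
      if .SH ∈ A then y .SH else if .ST ∈ A then y .ST else u 0 := by
  by_cases hSH : .SH ∈ A
  · rw [if_pos hSH, sophRock_intervene_solution_of_mem A y u hSH]
  by_cases hST : .ST ∈ A
  · rw [sophRock_recursive.solution_intervene_of_notMem y u hSH, if_neg hSH, if_pos hST]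
    exact sophRock_intervene_solution_of_mem A y u hST
  · rw [sophRock_recursive.solution_intervene_of_notMem y u hSH, if_neg hSH, if_neg hST]
    exact sophRock_recursive.solution_intervene_of_notMem y u hST

theorem sophRock_intervene_solution_BS_of_notMem (hBS : .BS ∉ A) :
    (sophRock.intervene A y).solution u .BS =
      if (sophRock.intervene A y).solution u .SH = 1 ∨
        (sophRock.intervene A y).solution u .BH = 1 then 1 else 0 :=
  sophRock_recursive.solution_intervene_of_notMem y u hBS

end Intervention

theorem sophRock_AC2_ST {u : Fin 2 → ℤ} (h0 : u 0 = 1) (h1 : u 1 = 1) :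
    AC2 sophRock u .ST 1 (.eq .BS 1) {.BH} 0 fun _ => 0 := by
  refine ⟨by simp, by simp [sophRock], by simp [sophRock], ?_, fun Z' _ => ?_⟩
  · show ¬ _ = 1
    rw [sophRock_intervene_solution_BS_of_notMem _ _ _ (by simp), sophRock_intervene_solution_SH,
      sophRock_intervene_solution_of_mem _ _ _ (X := .BH) (by simp)]
    simp
  · set A := insert RockVar2.ST ({.BH} ∪ Z')
    show _ = 1
    by_cases hBS : .BS ∈ A
    · rw [sophRock_intervene_solution_of_mem A _ u hBS]
      simp [sophRock_solution_of_throws h0 h1]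
    · rw [sophRock_intervene_solution_BS_of_notMem A _ u hBS, sophRock_intervene_solution_SH]
      simp [A, sophRock_solution_of_throws h0 h1]

theorem sophRock_not_isCause_BT {u : Fin 2 → ℤ} (h0 : u 0 = 1) (h1 : u 1 = 1) :
    ¬ IsCause sophRock u .BT 1 (.eq .BS 1) := by
  rintro ⟨-, W, x', w', hBT, -, -, hfail, hrestore⟩
  have hBS : .BS ∉ W := by
    intro hBS
    have h := hrestore ∅ (Set.empty_subset _)
    change _ = 1 at h
    apply hfail
    change _ = 1
    rw [sophRock_intervene_solution_of_mem _ _ _ (by simp [hBS])] at h ⊢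
    simpa [hBS] using h
  have h := hrestore ({.BH} \ W) fun _ hY => hY.2
  change ¬ _ = 1 at hfail
  change _ = 1 at h
  rw [sophRock_intervene_solution_BS_of_notMem _ _ _ (by simp [hBS]),
    sophRock_intervene_solution_SH] at hfail h
  rw [sophRock_intervene_solution_of_mem _ _ _ (X := .BH) (by simp)] at h
  simp only [sophRock_solution_of_throws h0 h1] at h
  -- `SH` is computed alike under both interventions, and `BH` is frozen at `w' BH` or at `0`
  by_cases hBH : .BH ∈ W
  · rw [sophRock_intervene_solution_of_mem _ _ _ (X := .BH) (by simp [hBH])] at hfail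
    split_ifs at hfail h <;> simp_all
  · split_ifs at hfail h <;> simp_all

/-- In the sophisticated rock-throwing model, in the context where both Suzy
and Billy throw: `ST = 1` is a cause of `BS = 1` with degree of
responsibility `1`, while `BT = 1` is not a cause of `BS = 1` and has degree
of responsibility `0`. -/
theorem sophRock_responsibility (u : Fin 2 → ℤ) (h0 : u 0 = 1) (h1 : u 1 = 1) :
    IsCause sophRock u RockVar2.ST 1 (CausalFormula.eq RockVar2.BS 1) ∧
    dr sophRock u RockVar2.ST 1 (CausalFormula.eq RockVar2.BS 1) = 1 ∧
    ¬ IsCause sophRock u RockVar2.BT 1 (CausalFormula.eq RockVar2.BS 1) ∧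
    dr sophRock u RockVar2.BT 1 (CausalFormula.eq RockVar2.BS 1) = 0 := by
  have hsol := sophRock_solution_of_throws h0 h1
  have hST : IsCause sophRock u .ST 1 (.eq .BS 1) :=
    ⟨⟨by simp [hsol], by simp [CausalFormula.holds, hsol]⟩, _, _, _, sophRock_AC2_ST h0 h1⟩
  have hBT := sophRock_not_isCause_BT h0 h1
  exact ⟨hST, dr_eq_one_of_AC2_of_eqOn hST (sophRock_AC2_ST h0 h1) (by simp [Set.EqOn, hsol]),
    hBT, if_neg hBT⟩
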